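/- Let G be the group ⟨a, b | aba = bab⟩ (the braid group on 3 strands) and let N be the normal closure of (ab)⁶. Then the quotient G/N has abelianization Z/12, and the image of a in (G/N)^{ab} generates it. -/

import Mathlib

/-- The braid group on 3 strands, `B₃ = ⟨a, b | aba = bab⟩`. -/
def braidRels : Set (FreeGroup (Fin 2)) :=
  { FreeGroup.of 0 * FreeGroup.of 1 * FreeGroup.of 0 *
      (FreeGroup.of 1 * FreeGroup.of 0 * FreeGroup.of 1)⁻¹ }

/-- The normal closure of `(ab)⁶` in `B₃`. -/
def centerPow : Subgroup (PresentedGroup braidRels) :=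
  Subgroup.normalClosure
    {(PresentedGroup.of (rels := braidRels) 0 *
       PresentedGroup.of (rels := braidRels) 1) ^ 6}

instance : centerPow.Normal := Subgroup.normalClosure_normal

/-!
In any abelian quotient the braid relation `aba = bab` forces `a = b`, so the abelianization
of `B₃ ⧸ ⟨⟨(ab)⁶⟩⟩` is cyclic, generated by the image of `a`, and `a¹² = (ab)⁶ = 1` there.
The exponent sum modulo 12 respects the braid relation and kills `(ab)⁶`, and it sends `a` to
the generator `1` of `ℤ/12`; hence the image of `a` has order exactly 12.
-/

theorem eq_of_mul_mul_eq_mul_mul {M : Type*} [CancelCommMonoid M] {a b : M}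
    (h : a * b * a = b * a * b) : a = b := by
  have h' : (a * b) * a = (a * b) * b := by
    simpa only [mul_comm b a] using h
  exact mul_left_cancel h'

theorem orderOf_eq_of_pow_eq_one_of_orderOf_map {G H : Type*} [Monoid G] [Monoid H]
    (f : G →* H) {x : G} {n : ℕ} (hx : x ^ n = 1) (hfx : orderOf (f x) = n) :
    orderOf x = n :=
  Nat.dvd_antisymm (orderOf_dvd_of_pow_eq_one hx) (hfx ▸ orderOf_map_dvd f x)

theorem Abelianization.of_surjective {G : Type*} [Group G] :
    Function.Surjective (Abelianization.of (G := G)) :=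
  QuotientGroup.mk_surjective

namespace BraidThree

local notation "B₃" => PresentedGroup braidRels
local notation "σ₁" => PresentedGroup.of (rels := braidRels) (0 : Fin 2)
local notation "σ₂" => PresentedGroup.of (rels := braidRels) (1 : Fin 2)

theorem braid_rel : σ₁ * σ₂ * σ₁ = σ₂ * σ₁ * σ₂ := by
  have h := PresentedGroup.one_of_mem (Set.mem_singleton _ : _ ∈ braidRels)
  simp only [map_mul, map_inv] at h
  exact mul_inv_eq_one.mp h

theorem pow_six_mem_centerPow : (σ₁ * σ₂) ^ 6 ∈ centerPow :=
  Subgroup.subset_normalClosure rfl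

def exponentSumMod (n : ℕ) : B₃ →* Multiplicative (ZMod n) :=
  PresentedGroup.toGroup (f := fun _ => Multiplicative.ofAdd 1) <| by
    rintro r rfl
    simp only [map_mul, map_inv, FreeGroup.lift_apply_of]
    group

theorem exponentSumMod_of (n : ℕ) (i : Fin 2) :
    exponentSumMod n (PresentedGroup.of i) = Multiplicative.ofAdd 1 :=
  PresentedGroup.toGroup.of _

theorem centerPow_le_ker_exponentSumMod : centerPow ≤ (exponentSumMod 12).ker :=
  Subgroup.normalClosure_le_normal <| by
    rintro _ rfl
    rw [SetLike.mem_coe, MonoidHom.mem_ker, map_pow, map_mul, exponentSumMod_of,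
      exponentSumMod_of]
    decide

-- The abelianization of the twist subgroup `T(N₃) = B₃ ⧸ ⟨⟨(σ₁σ₂)⁶⟩⟩`.
abbrev TwistAb : Type := Abelianization (B₃ ⧸ centerPow)

def π : B₃ →* TwistAb := Abelianization.of.comp (QuotientGroup.mk' centerPow)

theorem π_σ₂ : π σ₂ = π σ₁ :=
  (eq_of_mul_mul_eq_mul_mul (by simpa only [map_mul] using congrArg π braid_rel)).symm

theorem π_σ₁_pow_twelve : π σ₁ ^ 12 = 1 := by
  have h : π ((σ₁ * σ₂) ^ 6) = 1 := by
    rw [π, MonoidHom.comp_apply, QuotientGroup.mk'_apply,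
      (QuotientGroup.eq_one_iff _).mpr pow_six_mem_centerPow, map_one]
  rwa [map_pow, map_mul, π_σ₂, ← pow_two, ← pow_mul] at h

theorem zpowers_π_σ₁ : Subgroup.zpowers (π σ₁) = ⊤ := by
  have hrange : Set.range (π ∘ PresentedGroup.of) = {π σ₁} := by
    ext y
    simp only [Set.mem_range, Function.comp_apply, Set.mem_singleton_iff, Fin.exists_fin_two,
      π_σ₂, or_self, eq_comm]
  have hπ : Function.Surjective π :=
    Abelianization.of_surjective.comp (QuotientGroup.mk'_surjective centerPow)
  rw [Subgroup.zpowers_eq_closure, ← hrange, Set.range_comp, ← MonoidHom.map_closure,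
    PresentedGroup.closure_range_of, ← MonoidHom.range_eq_map, MonoidHom.range_eq_top]
  exact hπ

def exponentSumModTwistAb : TwistAb →* Multiplicative (ZMod 12) :=
  Abelianization.lift (QuotientGroup.lift centerPow (exponentSumMod 12) centerPow_le_ker_exponentSumMod)

theorem orderOf_π_σ₁ : orderOf (π σ₁) = 12 := by
  refine orderOf_eq_of_pow_eq_one_of_orderOf_map exponentSumModTwistAb π_σ₁_pow_twelve ?_
  have hσ₁ : exponentSumModTwistAb (π σ₁) = Multiplicative.ofAdd 1 := exponentSumMod_of 12 0
  rw [hσ₁, orderOf_ofAdd_eq_addOrderOf, ZMod.addOrderOf_one]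

theorem card_twistAb : Nat.card TwistAb = 12 := by
  rw [← orderOf_π_σ₁, orderOf_eq_card_of_zpowers_eq_top zpowers_π_σ₁]

end BraidThree

/-- `B₃ / ⟨⟨(ab)⁶⟩⟩` has abelianization `ℤ/12`, generated by the image
of `a`. -/
theorem stmt15 :
    Nonempty (Abelianization (PresentedGroup braidRels ⧸ centerPow) ≃*
        Multiplicative (ZMod 12)) ∧
      Subgroup.zpowers
        (Abelianization.of
          (QuotientGroup.mk' centerPow
            (PresentedGroup.of (rels := braidRels) 0))) = ⊤ := by
  have hgen := BraidThree.zpowers_π_σ₁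
  exact ⟨⟨(zmodMulEquivOfGenerator ((Subgroup.eq_top_iff' _).mp hgen)
    BraidThree.card_twistAb).symm⟩, hgen⟩
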